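/- Let (A, B, ψ, J, K) be a cylindrical bialgebra and let g ∈ A be invertible. Set ψ_g = Ad(g)∘ψ, J_g = (g⊗g)·J·Δ(g)^{-1}, and K_g = g·K. Then (A, B, ψ_g, J_g, K_g) is again a cylindrical bialgebra; in particular (ψ_g, J_g) is a twist pair, K_g·b = ψ_g(b)·K_g for all b ∈ B, and Δ(K_g) = J_g^{-1}·(1⊗K_g)·R^{ψ_g}·(K_g⊗1). -/

import Mathlib

/-!
Every identity required of the gauged data is the corresponding identity for `(ψ, J, K)`
conjugated by the gauge: the factors `g`, `g⁻¹`, `g ⊗ g`, `g⁻¹ ⊗ g⁻¹` and `Δ(g)^{±1}` that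
the gauge introduces cancel in pairs, because `Δ` is multiplicative. Beyond that, the cocycle
identity needs coassociativity of `Δ` to move `Δ(g)⁻¹` from `(Δ ⊗ id)` to `(id ⊗ Δ)`, and
the compatibility with `R` needs `Δ^{op}(g⁻¹) · R · Δ(g) = R`.
-/

open TensorProduct

section Defs
variable (k A : Type*) [CommSemiring k] [Semiring A]

section Alg
variable [Algebra k A]

noncomputable def emb12 : A ⊗[k] A →ₐ[k] A ⊗[k] (A ⊗[k] A) :=
  Algebra.TensorProduct.map (AlgHom.id k A) Algebra.TensorProduct.includeLeft

noncomputable def emb13 : A ⊗[k] A →ₐ[k] A ⊗[k] (A ⊗[k] A) :=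
  Algebra.TensorProduct.map (AlgHom.id k A) Algebra.TensorProduct.includeRight

noncomputable def emb23 : A ⊗[k] A →ₐ[k] A ⊗[k] (A ⊗[k] A) :=
  Algebra.TensorProduct.includeRight

noncomputable def flip2 : A ⊗[k] A ≃ₐ[k] A ⊗[k] A := Algebra.TensorProduct.comm k A A

noncomputable def psiL (ψ : A ≃ₐ[k] A) : A ⊗[k] A →ₐ[k] A ⊗[k] A :=
  Algebra.TensorProduct.map ψ.toAlgHom (AlgHom.id k A)

noncomputable def psiR (ψ : A ≃ₐ[k] A) : A ⊗[k] A →ₐ[k] A ⊗[k] A :=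
  Algebra.TensorProduct.map (AlgHom.id k A) ψ.toAlgHom

noncomputable def psiBoth (ψ : A ≃ₐ[k] A) : A ⊗[k] A →ₐ[k] A ⊗[k] A :=
  Algebra.TensorProduct.map ψ.toAlgHom ψ.toAlgHom

noncomputable def sub2 (B : Subalgebra k A) : Submodule k (A ⊗[k] A) :=
  Submodule.span k {t : A ⊗[k] A | ∃ x ∈ B, ∃ y : A, t = x ⊗ₜ[k] y}

end Alg

variable [Bialgebra k A]

noncomputable def cop : A →ₐ[k] A ⊗[k] A := Bialgebra.comulAlgHom k A

noncomputable def copOp : A →ₐ[k] A ⊗[k] A := (flip2 k A).toAlgHom.comp (cop k A)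

noncomputable def cou : A →ₐ[k] k := Bialgebra.counitAlgHom k A

noncomputable def copL : A ⊗[k] A →ₐ[k] A ⊗[k] (A ⊗[k] A) :=
  (Algebra.TensorProduct.assoc k k k A A A).toAlgHom.comp
    (Algebra.TensorProduct.map (cop k A) (AlgHom.id k A))

noncomputable def copR : A ⊗[k] A →ₐ[k] A ⊗[k] (A ⊗[k] A) :=
  Algebra.TensorProduct.map (AlgHom.id k A) (cop k A)

noncomputable def couL : A ⊗[k] A →ₐ[k] A :=
  (Algebra.TensorProduct.lid k A).toAlgHom.comp
    (Algebra.TensorProduct.map (cou k A) (AlgHom.id k A))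

noncomputable def couR : A ⊗[k] A →ₐ[k] A :=
  (Algebra.TensorProduct.rid k k A).toAlgHom.comp
    (Algebra.TensorProduct.map (AlgHom.id k A) (cou k A))

structure QTriangular (R : A ⊗[k] A) : Prop where
  isUnit : IsUnit R
  intertwine : ∀ x : A, R * cop k A x = copOp k A x * R
  coproduct_left : copL k A R = emb13 k A R * emb23 k A R
  coproduct_right : copR k A R = emb13 k A R * emb12 k A R

end Defs

section QSP
variable (k A : Type*) [CommSemiring k] [Semiring A] [Bialgebra k A]

/-- A twist pair `(ψ, J)`: `J` is a Drinfeld twist and `A^{cop,ψ} = A_J` as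
quasitriangular bialgebras. -/
structure TwistPair (R : A ⊗[k] A) (ψ : A ≃ₐ[k] A) (J Jinv : A ⊗[k] A) : Prop where
  mul_inv : J * Jinv = 1
  inv_mul : Jinv * J = 1
  cocycle : emb12 k A J * copL k A J = emb23 k A J * copR k A J
  counit_left : couL k A J = 1
  counit_right : couR k A J = 1
  compat_coproduct : ∀ x : A, psiBoth k A ψ (copOp k A (ψ.symm x)) = J * cop k A x * Jinv
  compat_R : psiBoth k A ψ (flip2 k A R) = flip2 k A J * R * Jinv

/-- A cylindrical bialgebra `(A, B, ψ, J, K)`. -/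
structure Cylindrical (R : A ⊗[k] A) (B : Subalgebra k A) (ψ : A ≃ₐ[k] A)
    (J Jinv : A ⊗[k] A) (K : A) : Prop where
  qt : QTriangular k A R
  coideal : ∀ b ∈ B, cop k A b ∈ sub2 k A B
  twist : TwistPair k A R ψ J Jinv
  isUnitK : IsUnit K
  intertwine : ∀ b ∈ B, K * b = ψ b * K
  coproduct : cop k A K = Jinv * ((1 : A) ⊗ₜ[k] K) * psiL k A ψ R * (K ⊗ₜ[k] (1 : A))

/-- A reflection bialgebra `(A, B, ψ, J, 𝕂)`, the universal tensor K-matrix `𝕂` being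
an element of `B ⊗ A ⊆ A ⊗ A`. -/
structure Reflection (R : A ⊗[k] A) (B : Subalgebra k A) (ψ : A ≃ₐ[k] A)
    (J Jinv : A ⊗[k] A) (TK : A ⊗[k] A) : Prop where
  qt : QTriangular k A R
  coideal : ∀ b ∈ B, cop k A b ∈ sub2 k A B
  twist : TwistPair k A R ψ J Jinv
  support : TK ∈ sub2 k A B
  isUnitTK : IsUnit TK
  intertwine : ∀ b ∈ B, TK * cop k A b = psiR k A ψ (cop k A b) * TK
  coproduct_left : copL k A TK =
    emb23 k A (flip2 k A (psiL k A ψ R)) * emb13 k A TK * emb23 k A R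
  coproduct_right : copR k A TK =
    emb23 k A Jinv * emb13 k A TK * emb23 k A (psiL k A ψ R) * emb12 k A TK

end QSP

section Gauge
variable (k A : Type*) [CommSemiring k] [Semiring A] [Bialgebra k A]

/-- the gauged twist automorphism `ψ_g = Ad(g) ∘ ψ` -/
noncomputable def gaugePsi (ψ : A ≃ₐ[k] A) (g gInv : A) : A → A :=
  fun x => g * ψ x * gInv

/-- the inverse `ψ_g⁻¹ = ψ⁻¹ ∘ Ad(g)⁻¹` of the gauged twist automorphism -/
noncomputable def gaugePsiInv (ψ : A ≃ₐ[k] A) (g gInv : A) : A → A :=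
  fun x => ψ.symm (gInv * x * g)

/-- `ψ_g ⊗ ψ_g = Ad(g ⊗ g) ∘ (ψ ⊗ ψ)` on `A ⊗ A` -/
noncomputable def gaugePsi2 (ψ : A ≃ₐ[k] A) (g gInv : A) : A ⊗[k] A → A ⊗[k] A :=
  fun u => (g ⊗ₜ[k] g) * psiBoth k A ψ u * (gInv ⊗ₜ[k] gInv)

/-- the gauged Drinfeld twist `J_g = (g ⊗ g) · J · Δ(g)⁻¹` -/
noncomputable def gaugeJ (J : A ⊗[k] A) (g gInv : A) : A ⊗[k] A :=
  (g ⊗ₜ[k] g) * J * cop k A gInv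

/-- the inverse `J_g⁻¹ = Δ(g) · J⁻¹ · (g⁻¹ ⊗ g⁻¹)` of the gauged Drinfeld twist -/
noncomputable def gaugeJinv (Jinv : A ⊗[k] A) (g gInv : A) : A ⊗[k] A :=
  cop k A g * Jinv * (gInv ⊗ₜ[k] gInv)

/-- `R^{ψ_g} = (ψ_g ⊗ id)(R) = (g ⊗ 1) · R^ψ · (g⁻¹ ⊗ 1)` -/
noncomputable def gaugeRpsi (R : A ⊗[k] A) (ψ : A ≃ₐ[k] A) (g gInv : A) : A ⊗[k] A :=
  (g ⊗ₜ[k] (1 : A)) * psiL k A ψ R * (gInv ⊗ₜ[k] (1 : A))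

end Gauge

section Legs

variable {k A : Type*} [CommSemiring k] [Semiring A] [Bialgebra k A]

lemma emb12_tmul (x y : A) : emb12 k A (x ⊗ₜ[k] y) = x ⊗ₜ[k] (y ⊗ₜ[k] (1 : A)) := by
  simp [emb12]

lemma emb23_apply (u : A ⊗[k] A) : emb23 k A u = (1 : A) ⊗ₜ[k] u := rfl

lemma copR_tmul (x y : A) : copR k A (x ⊗ₜ[k] y) = x ⊗ₜ[k] cop k A y := by
  simp [copR]

lemma copOp_apply (x : A) : copOp k A x = flip2 k A (cop k A x) := rfl

lemma copL_tmul (x y : A) :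
    copL k A (x ⊗ₜ[k] y) = emb12 k A (cop k A x) * ((1 : A) ⊗ₜ[k] ((1 : A) ⊗ₜ[k] y)) := by
  simp only [copL, AlgHom.coe_comp, Function.comp_apply,
    Algebra.TensorProduct.map_tmul, AlgHom.coe_id, id_eq]
  induction cop k A x using TensorProduct.induction_on with
  | zero => simp
  | tmul a b => simp [emb12_tmul, Algebra.TensorProduct.tmul_mul_tmul]
  | add u v hu hv => rw [add_tmul, map_add, hu, hv, map_add, add_mul]

lemma emb12_mul_comm_tmul_tmul (u : A ⊗[k] A) (c : A) :
    emb12 k A u * ((1 : A) ⊗ₜ[k] ((1 : A) ⊗ₜ[k] c)) =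
      ((1 : A) ⊗ₜ[k] ((1 : A) ⊗ₜ[k] c)) * emb12 k A u := by
  induction u using TensorProduct.induction_on with
  | zero => simp
  | tmul a b => simp [emb12_tmul, Algebra.TensorProduct.tmul_mul_tmul]
  | add u v hu hv => rw [map_add, add_mul, mul_add, hu, hv]

lemma copL_cop (x : A) : copL k A (cop k A x) = copR k A (cop k A x) :=
  Coalgebra.coassoc_apply x

end Legs

section GaugeTransformation

variable {k A : Type*} [CommSemiring k] [Semiring A] [Bialgebra k A] {g gInv : A}

lemma cop_mul_cop_of_mul_eq_one (h : gInv * g = 1) : cop k A gInv * cop k A g = 1 := by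
  rw [← map_mul, h, map_one]

lemma tmul_mul_tmul_of_mul_eq_one (h : gInv * g = 1) :
    (gInv ⊗ₜ[k] gInv : A ⊗[k] A) * (g ⊗ₜ[k] g) = 1 := by
  rw [Algebra.TensorProduct.tmul_mul_tmul, h, Algebra.TensorProduct.one_def]

lemma gaugeJ_mul_gaugeJinv {J Jinv : A ⊗[k] A} (hJ : J * Jinv = 1) (hg : g * gInv = 1)
    (hg' : gInv * g = 1) : gaugeJ k A J g gInv * gaugeJinv k A Jinv g gInv = 1 := by
  calc gaugeJ k A J g gInv * gaugeJinv k A Jinv g gInv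
      = (g ⊗ₜ[k] g) * J * (cop k A gInv * cop k A g) * Jinv * (gInv ⊗ₜ[k] gInv) := by
        simp only [gaugeJ, gaugeJinv, mul_assoc]
    _ = 1 := by
        rw [cop_mul_cop_of_mul_eq_one hg', mul_one, mul_assoc _ J, hJ, mul_one,
          tmul_mul_tmul_of_mul_eq_one hg]

lemma gaugeJinv_mul_gaugeJ {J Jinv : A ⊗[k] A} (hJ : Jinv * J = 1) (hg : g * gInv = 1)
    (hg' : gInv * g = 1) : gaugeJinv k A Jinv g gInv * gaugeJ k A J g gInv = 1 := by
  calc gaugeJinv k A Jinv g gInv * gaugeJ k A J g gInv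
      = cop k A g * Jinv * ((gInv ⊗ₜ[k] gInv) * (g ⊗ₜ[k] g)) * J * cop k A gInv := by
        simp only [gaugeJ, gaugeJinv, mul_assoc]
    _ = 1 := by
        rw [tmul_mul_tmul_of_mul_eq_one hg', mul_one, mul_assoc _ Jinv, hJ, mul_one,
          cop_mul_cop_of_mul_eq_one hg]

lemma emb12_gaugeJ_mul_copL (J : A ⊗[k] A) (hg' : gInv * g = 1) :
    emb12 k A (gaugeJ k A J g gInv) * copL k A (g ⊗ₜ[k] g) =
      (g ⊗ₜ[k] (g ⊗ₜ[k] g)) * emb12 k A J := by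
  calc emb12 k A (gaugeJ k A J g gInv) * copL k A (g ⊗ₜ[k] g)
      = emb12 k A (g ⊗ₜ[k] g) * emb12 k A J *
          emb12 k A (cop k A gInv * cop k A g) * ((1 : A) ⊗ₜ[k] ((1 : A) ⊗ₜ[k] g)) := by
        simp only [gaugeJ, copL_tmul, map_mul, mul_assoc]
    _ = emb12 k A (g ⊗ₜ[k] g) * ((1 : A) ⊗ₜ[k] ((1 : A) ⊗ₜ[k] g)) * emb12 k A J := by
        rw [cop_mul_cop_of_mul_eq_one hg', map_one, mul_one, mul_assoc,
          emb12_mul_comm_tmul_tmul, mul_assoc]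
    _ = (g ⊗ₜ[k] (g ⊗ₜ[k] g)) * emb12 k A J := by
        simp [emb12_tmul, Algebra.TensorProduct.tmul_mul_tmul]

lemma emb23_gaugeJ_mul_copR (J : A ⊗[k] A) (hg' : gInv * g = 1) :
    emb23 k A (gaugeJ k A J g gInv) * copR k A (g ⊗ₜ[k] g) =
      (g ⊗ₜ[k] (g ⊗ₜ[k] g)) * emb23 k A J := by
  simp [gaugeJ, emb23_apply, copR_tmul, Algebra.TensorProduct.tmul_mul_tmul, mul_assoc,
    cop_mul_cop_of_mul_eq_one hg']

lemma gaugeJ_cocycle {J : A ⊗[k] A}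
    (hJ : emb12 k A J * copL k A J = emb23 k A J * copR k A J) (hg' : gInv * g = 1) :
    emb12 k A (gaugeJ k A J g gInv) * copL k A (gaugeJ k A J g gInv) =
      emb23 k A (gaugeJ k A J g gInv) * copR k A (gaugeJ k A J g gInv) := by
  calc emb12 k A (gaugeJ k A J g gInv) * copL k A (gaugeJ k A J g gInv)
      = emb12 k A (gaugeJ k A J g gInv) * copL k A (g ⊗ₜ[k] g) * copL k A J *
          copL k A (cop k A gInv) := by
        simp only [gaugeJ, map_mul, mul_assoc]
    _ = (g ⊗ₜ[k] (g ⊗ₜ[k] g)) * (emb23 k A J * copR k A J) * copR k A (cop k A gInv) := by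
        rw [emb12_gaugeJ_mul_copL J hg', mul_assoc _ (emb12 k A J), hJ, copL_cop]
    _ = emb23 k A (gaugeJ k A J g gInv) * copR k A (gaugeJ k A J g gInv) := by
        rw [← mul_assoc, ← emb23_gaugeJ_mul_copR J hg']
        simp only [gaugeJ, map_mul (copR k A), mul_assoc]

lemma gaugePsi2_copOp_gaugePsiInv {ψ : A ≃ₐ[k] A} {J Jinv : A ⊗[k] A}
    (hψ : ∀ x : A, psiBoth k A ψ (copOp k A (ψ.symm x)) = J * cop k A x * Jinv) (x : A) :
    gaugePsi2 k A ψ g gInv (copOp k A (gaugePsiInv k A ψ g gInv x)) =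
      gaugeJ k A J g gInv * cop k A x * gaugeJinv k A Jinv g gInv := by
  rw [gaugePsi2, gaugePsiInv, hψ, gaugeJ, gaugeJinv, map_mul, map_mul]
  simp only [mul_assoc]

lemma QTriangular.copOp_mul_mul_cop {R : A ⊗[k] A} (hR : QTriangular k A R) {x y : A}
    (h : y * x = 1) : copOp k A y * (R * cop k A x) = R := by
  rw [hR.intertwine, ← mul_assoc, ← map_mul, h, map_one, one_mul]

lemma gaugePsi2_flip2 {R : A ⊗[k] A} {ψ : A ≃ₐ[k] A} {J Jinv : A ⊗[k] A}
    (hR : QTriangular k A R) (hψ : psiBoth k A ψ (flip2 k A R) = flip2 k A J * R * Jinv)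
    (hg' : gInv * g = 1) :
    gaugePsi2 k A ψ g gInv (flip2 k A R) =
      flip2 k A (gaugeJ k A J g gInv) * R * gaugeJinv k A Jinv g gInv := by
  have hflip : flip2 k A (g ⊗ₜ[k] g) = g ⊗ₜ[k] g := rfl
  calc gaugePsi2 k A ψ g gInv (flip2 k A R)
      = (g ⊗ₜ[k] g) * flip2 k A J * (copOp k A gInv * (R * cop k A g)) * Jinv *
          (gInv ⊗ₜ[k] gInv) := by
        rw [gaugePsi2, hψ, hR.copOp_mul_mul_cop hg']
        simp only [mul_assoc]
    _ = flip2 k A (gaugeJ k A J g gInv) * R * gaugeJinv k A Jinv g gInv := by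
        simp only [gaugeJ, gaugeJinv, map_mul, hflip, copOp_apply, mul_assoc]

lemma mul_mul_eq_gaugePsi_mul {ψ : A ≃ₐ[k] A} {K b : A} (hK : K * b = ψ b * K)
    (hg' : gInv * g = 1) : g * K * b = gaugePsi k A ψ g gInv b * (g * K) := by
  rw [gaugePsi, mul_assoc, hK, mul_assoc (g * ψ b), ← mul_assoc gInv, hg', one_mul, mul_assoc]

lemma cop_mul_eq_gaugeJinv_mul {R : A ⊗[k] A} {ψ : A ≃ₐ[k] A} {Jinv : A ⊗[k] A} {K : A}
    (hK : cop k A K = Jinv * ((1 : A) ⊗ₜ[k] K) * psiL k A ψ R * (K ⊗ₜ[k] (1 : A)))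
    (hg' : gInv * g = 1) :
    cop k A (g * K) = gaugeJinv k A Jinv g gInv * ((1 : A) ⊗ₜ[k] (g * K)) *
      gaugeRpsi k A R ψ g gInv * ((g * K) ⊗ₜ[k] (1 : A)) := by
  have h₁ : (gInv ⊗ₜ[k] gInv : A ⊗[k] A) * ((1 : A) ⊗ₜ[k] (g * K)) * (g ⊗ₜ[k] (1 : A)) =
      (1 : A) ⊗ₜ[k] K := by
    simp [Algebra.TensorProduct.tmul_mul_tmul, ← mul_assoc, hg']
  have h₂ : (gInv ⊗ₜ[k] (1 : A) : A ⊗[k] A) * ((g * K) ⊗ₜ[k] (1 : A)) = K ⊗ₜ[k] (1 : A) := by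
    simp [Algebra.TensorProduct.tmul_mul_tmul, ← mul_assoc, hg']
  rw [map_mul, hK, gaugeJinv, gaugeRpsi, ← h₁, ← h₂]
  simp only [mul_assoc]

end GaugeTransformation

/-- Gauge transformation of a cylindrical bialgebra: if
`(A, B, ψ, J, K)` is a cylindrical bialgebra and `g ∈ A` is invertible, then
`(A, B, ψ_g, J_g, K_g)` with `ψ_g = Ad(g)∘ψ`, `J_g = (g⊗g)·J·Δ(g)⁻¹`, `K_g = g·K`
is again a cylindrical bialgebra: `(ψ_g, J_g)` is a twist pair,
`K_g·b = ψ_g(b)·K_g` for `b ∈ B`, and `Δ(K_g) = J_g⁻¹·(1⊗K_g)·R^{ψ_g}·(K_g⊗1)`. -/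
theorem cylindrical_gauge_transformation
    {k A : Type*} [Field k] [Ring A] [Bialgebra k A]
    (R : A ⊗[k] A) (B : Subalgebra k A) (ψ : A ≃ₐ[k] A) (J Jinv : A ⊗[k] A) (K : A)
    (hcyl : Cylindrical k A R B ψ J Jinv K)
    (g gInv : A) (hg : g * gInv = 1) (hg' : gInv * g = 1) :
    -- (ψ_g, J_g) is a twist pair: J_g is invertible, satisfies the cocycle identity, and
    -- A^{cop,ψ_g} = A_{J_g} as quasitriangular bialgebras
    (gaugeJ k A J g gInv * gaugeJinv k A Jinv g gInv = 1) ∧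
    (gaugeJinv k A Jinv g gInv * gaugeJ k A J g gInv = 1) ∧
    (emb12 k A (gaugeJ k A J g gInv) * copL k A (gaugeJ k A J g gInv) =
      emb23 k A (gaugeJ k A J g gInv) * copR k A (gaugeJ k A J g gInv)) ∧
    (∀ x : A, gaugePsi2 k A ψ g gInv (copOp k A (gaugePsiInv k A ψ g gInv x)) =
      gaugeJ k A J g gInv * cop k A x * gaugeJinv k A Jinv g gInv) ∧
    (gaugePsi2 k A ψ g gInv (flip2 k A R) =
      flip2 k A (gaugeJ k A J g gInv) * R * gaugeJinv k A Jinv g gInv) ∧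
    -- K_g = g·K is an invertible basic K-matrix for (ψ_g, J_g)
    (IsUnit (g * K)) ∧
    (∀ b ∈ B, (g * K) * b = gaugePsi k A ψ g gInv b * (g * K)) ∧
    (cop k A (g * K) =
      gaugeJinv k A Jinv g gInv * ((1 : A) ⊗ₜ[k] (g * K)) *
        gaugeRpsi k A R ψ g gInv * ((g * K) ⊗ₜ[k] (1 : A))) := by
  obtain ⟨hR, -, hJ, hKunit, hKB, hΔK⟩ := hcyl
  exact ⟨gaugeJ_mul_gaugeJinv hJ.mul_inv hg hg', gaugeJinv_mul_gaugeJ hJ.inv_mul hg hg',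
    gaugeJ_cocycle hJ.cocycle hg', gaugePsi2_copOp_gaugePsiInv hJ.compat_coproduct,
    gaugePsi2_flip2 hR hJ.compat_R hg', (isUnit_iff_exists.mpr ⟨gInv, hg, hg'⟩).mul hKunit,
    fun b hb => mul_mul_eq_gaugePsi_mul (hKB b hb) hg', cop_mul_eq_gaugeJinv_mul hΔK hg'⟩
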